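/- (Theorem 6.1, main identity) Let n be a positive integer, let P and P̃ be n×n real column-stochastic matrices, let α ∈ (0,1), and let q ∈ ℝⁿ be a stochastic vector. Let r satisfy r = αPr + (1−α)q and let r̃ satisfy r̃ = αP̃r̃ + (1−α)q. Then the series c = Σ_{i=0}^∞ α^{i+1} P̃^i (P̃ − P) r converges, and c = r̃ − r. -/

import Mathlib

/-- An `n × n` real matrix is column-stochastic if all entries are nonnegative
and each column sums to 1. -/
def ColStochastic {n : ℕ} (P : Matrix (Fin n) (Fin n) ℝ) : Prop :=
  (∀ i j, 0 ≤ P i j) ∧ ∀ j, ∑ i, P i j = 1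

/-- A vector is stochastic if its entries are nonnegative and sum to 1. -/
def StochasticVec {n : ℕ} (q : Fin n → ℝ) : Prop :=
  (∀ i, 0 ≤ q i) ∧ ∑ i, q i = 1

open Filter Finset Matrix Topology

/-! Subtracting the two PageRank equations gives `r̃ - r = α P̃ (r̃ - r) + α (P̃ - P) r`,
so the partial sums of the series telescope to `(r̃ - r) - αᴺ P̃ᴺ (r̃ - r)`. Powers of a
column-stochastic matrix are column-stochastic, so `P̃ᴺ` is uniformly bounded and the
geometric factor `αᴺ` makes the series converge absolutely and the remainder vanish. -/

lemma norm_mulVec_le_sum_abs_of_mem_colStochastic {n : ℕ} {M : Matrix (Fin n) (Fin n) ℝ}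
    (hM : M ∈ colStochastic ℝ (Fin n)) (v : Fin n → ℝ) : ‖M *ᵥ v‖ ≤ ∑ k, |v k| := by
  refine (pi_norm_le_iff_of_nonneg (by positivity)).2 fun j => ?_
  rw [Real.norm_eq_abs, mulVec, dotProduct]
  refine (abs_sum_le_sum_abs _ _).trans (sum_le_sum fun k _ => ?_)
  rw [abs_mul, abs_of_nonneg (nonneg_of_mem_colStochastic hM)]
  exact mul_le_of_le_one_left (abs_nonneg _) (le_one_of_mem_colStochastic hM)

lemma sum_range_pow_succ_smul_pow_mulVec {ι R : Type*} [Fintype ι] [DecidableEq ι] [CommRing R]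
    {A : Matrix ι ι R} {a : R} {d v : ι → R} (h : d = a • A *ᵥ d + a • v) (N : ℕ) :
    ∑ i ∈ range N, a ^ (i + 1) • (A ^ i) *ᵥ v = d - a ^ N • (A ^ N) *ᵥ d := by
  induction N with
  | zero => simp
  | succ N ih =>
    have hv : a • v = d - a • A *ᵥ d := eq_sub_of_add_eq' h.symm
    have hstep : a ^ (N + 1) • (A ^ N) *ᵥ v =
        a ^ N • (A ^ N) *ᵥ d - a ^ (N + 1) • (A ^ (N + 1)) *ᵥ d := by
      rw [pow_succ, mul_smul, ← mulVec_smul, hv, mulVec_sub, mulVec_smul, mulVec_mulVec,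
        ← pow_succ, smul_sub, mul_smul]
    rw [sum_range_succ, ih, hstep]
    abel

section GeometricallyDamped

variable {E : Type*} [SeminormedAddCommGroup E] [NormedSpace ℝ E] {α C : ℝ} {u : ℕ → E}

lemma summable_norm_pow_succ_smul_of_norm_le (hα : |α| < 1) (hu : ∀ i, ‖u i‖ ≤ C) :
    Summable fun i => ‖α ^ (i + 1) • u i‖ := by
  refine ((summable_geometric_of_lt_one (abs_nonneg α) hα).mul_left (|α| * C)).of_nonneg_of_le
    (fun _ => norm_nonneg _) fun i => ?_
  rw [norm_smul, norm_pow, Real.norm_eq_abs, pow_succ]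
  calc |α| ^ i * |α| * ‖u i‖ ≤ |α| ^ i * |α| * C := by gcongr; exact hu i
    _ = |α| * C * |α| ^ i := by ring

lemma tendsto_pow_smul_of_norm_le (hα : |α| < 1) (hu : ∀ i, ‖u i‖ ≤ C) :
    Tendsto (fun i => α ^ i • u i) atTop (𝓝 0) :=
  NormedField.tendsto_zero_smul_of_tendsto_zero_of_bounded
    (tendsto_pow_atTop_nhds_zero_of_abs_lt_one hα) (isBoundedUnder_of ⟨C, hu⟩)

end GeometricallyDamped

theorem ppr_offset_series_eq_diff_general
    {n : ℕ} (P Pt : Matrix (Fin n) (Fin n) ℝ)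
    (hPt : ColStochastic Pt)
    (α : ℝ) (hα : α ∈ Set.Ioo (0 : ℝ) 1) (q : Fin n → ℝ)
    (r rt : Fin n → ℝ)
    (hr : r = α • P.mulVec r + (1 - α) • q)
    (hrt : rt = α • Pt.mulVec rt + (1 - α) • q) :
    ∃ c : Fin n → ℝ,
      HasSum (fun i : ℕ => α ^ (i + 1) • (Pt ^ i).mulVec ((Pt - P).mulVec r)) c ∧
      c = rt - r := by
  have hα_abs : |α| < 1 := abs_lt.2 ⟨by linarith [hα.1], hα.2⟩
  have hbound (v : Fin n → ℝ) (i : ℕ) : ‖(Pt ^ i) *ᵥ v‖ ≤ ∑ k, |v k| :=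
    norm_mulVec_le_sum_abs_of_mem_colStochastic (pow_mem (mem_colStochastic_iff_sum.2 hPt) i) v
  have hdiff : rt - r = α • Pt *ᵥ (rt - r) + α • (Pt - P) *ᵥ r := by
    conv_lhs => rw [hrt, hr]
    simp only [mulVec_sub, sub_mulVec, smul_sub]
    abel
  refine ⟨rt - r, ?_, rfl⟩
  rw [hasSum_iff_tendsto_nat_of_summable_norm
      (summable_norm_pow_succ_smul_of_norm_le hα_abs (hbound _)),
    funext (sum_range_pow_succ_smul_pow_mulVec hdiff)]
  simpa using tendsto_const_nhds.sub (tendsto_pow_smul_of_norm_le hα_abs (hbound (rt - r)))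

/-- Theorem 6.1, main identity: the offset series
`c = Σ_{i=0}^∞ α^{i+1} P̃^i (P̃ − P) r` converges and equals `r̃ − r`. -/
theorem ppr_offset_series_eq_diff
    {n : ℕ} (hn : 0 < n) (P Pt : Matrix (Fin n) (Fin n) ℝ)
    (hP : ColStochastic P) (hPt : ColStochastic Pt)
    (α : ℝ) (hα : α ∈ Set.Ioo (0 : ℝ) 1) (q : Fin n → ℝ) (hq : StochasticVec q)
    (r rt : Fin n → ℝ)
    (hr : r = α • P.mulVec r + (1 - α) • q)
    (hrt : rt = α • Pt.mulVec rt + (1 - α) • q) :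
    ∃ c : Fin n → ℝ,
      HasSum (fun i : ℕ => α ^ (i + 1) • (Pt ^ i).mulVec ((Pt - P).mulVec r)) c ∧
      c = rt - r :=
  ppr_offset_series_eq_diff_general P Pt hPt α hα q r rt hr hrt
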